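/- Let g be a nondegenerate symmetric bilinear form on an n-dimensional real vector space V (with inverse form g^{-1} on V*), and for a covector p ∈ V* define the linear map A(p) : V* → V* by A(p)q = g^{-1}(p,p) q − g^{-1}(p,q) p (the Maxwell symbol acting on 1-forms). Then: (1) A(p)p = 0 for all p, so rank A(p) ≤ n−1; (2) if g^{-1}(p,p) ≠ 0 then rank A(p) = n−1; (3) if g^{-1}(p,p) = 0 and p ≠ 0 then rank A(p) = 1. -/

import Mathlib

/-- The Maxwell symbol acting on 1-forms: `A(p) q = g⁻¹(p,p) q − g⁻¹(p,q) p`. -/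
noncomputable def maxwellSymbol {W : Type*} [AddCommGroup W] [Module ℝ W]
    (B : LinearMap.BilinForm ℝ W) (p : W) : W →ₗ[ℝ] W :=
  B p p • LinearMap.id - (B p).smulRight p

lemma maxwellSymbol_apply {W : Type*} [AddCommGroup W] [Module ℝ W]
    (B : LinearMap.BilinForm ℝ W) (p q : W) :
    maxwellSymbol B p q = B p p • q - B p q • p := rfl

theorem maxwell_symbol_rank
    {W : Type*} [AddCommGroup W] [Module ℝ W] [FiniteDimensional ℝ W]
    {n : ℕ} (hn : 2 ≤ n) (hdim : Module.finrank ℝ W = n)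
    (B : LinearMap.BilinForm ℝ W) (hBsym : B.IsSymm) (hBnd : B.Nondegenerate)
    (p : W) :
    maxwellSymbol B p p = 0 ∧
    Module.finrank ℝ (LinearMap.range (maxwellSymbol B p)) ≤ n - 1 ∧
    (B p p ≠ 0 → Module.finrank ℝ (LinearMap.range (maxwellSymbol B p)) = n - 1) ∧
    (B p p = 0 → p ≠ 0 → Module.finrank ℝ (LinearMap.range (maxwellSymbol B p)) = 1) := by
  have hApp : ∀ q, maxwellSymbol B p q = B p p • q - B p q • p := fun q => rfl
  have hAp : maxwellSymbol B p p = 0 := by rw [hApp]; simp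
  have hrn : Module.finrank ℝ (LinearMap.range (maxwellSymbol B p))
      + Module.finrank ℝ (LinearMap.ker (maxwellSymbol B p)) = n := by
    rw [← hdim]
    exact LinearMap.finrank_range_add_finrank_ker _
  refine ⟨hAp, ?_, ?_, ?_⟩
  · -- rank ≤ n - 1
    by_cases hp : p = 0
    · have : maxwellSymbol B p = 0 := by
        ext q; rw [hApp]; simp [hp]
      rw [this, LinearMap.range_zero, finrank_bot]
      omega
    · have hker : 1 ≤ Module.finrank ℝ (LinearMap.ker (maxwellSymbol B p)) := by
        have hle : (ℝ ∙ p) ≤ LinearMap.ker (maxwellSymbol B p) := by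
          rw [Submodule.span_singleton_le_iff_mem]
          exact hAp
        calc 1 = Module.finrank ℝ (ℝ ∙ p) := (finrank_span_singleton hp).symm
        _ ≤ _ := Submodule.finrank_mono hle
      omega
  · -- B p p ≠ 0 → rank = n - 1
    intro hc
    have hp : p ≠ 0 := fun h => hc (by simp [h])
    have hker : LinearMap.ker (maxwellSymbol B p) = ℝ ∙ p := by
      apply le_antisymm
      · intro q hq
        rw [LinearMap.mem_ker, hApp, sub_eq_zero] at hq
        rw [Submodule.mem_span_singleton]
        refine ⟨B p q / B p p, ?_⟩
        have := congrArg (fun x => (B p p)⁻¹ • x) hq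
        simpa [smul_smul, inv_mul_cancel₀ hc, div_eq_inv_mul, mul_comm] using this.symm
      · rw [Submodule.span_singleton_le_iff_mem]
        exact hAp
    have : Module.finrank ℝ (LinearMap.ker (maxwellSymbol B p)) = 1 := by
      rw [hker]; exact finrank_span_singleton hp
    omega
  · -- B p p = 0 ∧ p ≠ 0 → rank = 1
    intro hc hp
    obtain ⟨q₀, hq₀⟩ : ∃ q, B p q ≠ 0 := by
      by_contra h
      push_neg at h
      exact hp (hBnd.1 p (fun m => h m))
    have hrange : LinearMap.range (maxwellSymbol B p) = ℝ ∙ p := by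
      apply le_antisymm
      · rintro _ ⟨q, rfl⟩
        rw [hApp, hc, zero_smul, zero_sub, Submodule.mem_span_singleton]
        exact ⟨-(B p q), by rw [neg_smul]⟩
      · rw [Submodule.span_singleton_le_iff_mem]
        refine ⟨(-(B p q₀)⁻¹) • q₀, ?_⟩
        rw [map_smul, hApp, hc, zero_smul, zero_sub]
        simp [smul_smul, inv_mul_cancel₀ hq₀]
    rw [hrange]
    exact finrank_span_singleton hp
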